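/- arXiv:1901.08372 — 6 statements merged into one kernel-verified Lean document; each statement's English description precedes it below -/
import Mathlib

section
/- Let M = {m_0 < m_1 < ⋯ < m_n} be a finite strictly increasing set of non-negative integers with the MC property, and put m = 1 + m_n. If A ⊆ M satisfies (A + r) mod m ⊆ M for some integer r with r ≢ 0 (mod m), then |A| ≤ 2. -/
/-! Each `a ∈ A` is `mᵢ` with `(a + r) mod m = mⱼ`, and the difference `mⱼ - mᵢ` lies in `(-m, m)`
and is congruent to `r`, so it is one of the two nonzero integers `r mod m` and `r mod m - m`.
By the MC property a nonzero difference is realised by at most one pair `(mⱼ, mᵢ)`, so `a` is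
determined by which of the two values its difference takes. -/

/-- The MC property of a family of integers. -/
def HasDistinctDifferences {ι : Type*} (f : ι → ℤ) : Prop :=
  ∀ a b c d : ι, a ≠ b → c ≠ d → f a - f b = f c - f d → a = c ∧ b = d

namespace HasDistinctDifferences

variable {ι : Type*} {f : ι → ℤ}

theorem eq_of_sub_eq_sub (hf : HasDistinctDifferences f) {a b c d : ι}
    (h : f a - f b = f c - f d) (hne : f a - f b ≠ 0) : a = c ∧ b = d :=
  hf a b c d (by rintro rfl; simp at hne) (by rintro rfl; simp_all) h

theorem card_le_of_forall_sub_mem (hf : HasDistinctDifferences f) {A D : Finset ℤ}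
    (hD : (0 : ℤ) ∉ D) (hA : ∀ a ∈ A, ∃ i j, a = f i ∧ f j - f i ∈ D) : A.card ≤ D.card := by
  refine Finset.card_le_card_of_forall_subsingleton (fun a δ ↦ ∃ i j, a = f i ∧ f j - f i = δ)
    (fun a ha ↦ ?_) (fun δ hδ ↦ ?_)
  · obtain ⟨i, j, rfl, hij⟩ := hA a ha
    exact ⟨_, hij, i, j, rfl, rfl⟩
  · rintro _ ⟨-, i, j, rfl, rfl⟩ _ ⟨-, i', j', rfl, hδ'⟩
    rw [(hf.eq_of_sub_eq_sub hδ'.symm (by rintro h; exact hD (h ▸ hδ))).2]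

end HasDistinctDifferences

theorem Int.emod_add_sub_eq_or {a m : ℤ} (ha : 0 ≤ a) (ham : a < m) (r : ℤ) :
    (a + r) % m - a = r % m ∨ (a + r) % m - a = r % m - m := by
  have hm : 0 < m := ha.trans_lt ham
  have hr₀ := Int.emod_nonneg r hm.ne'
  have hr₁ := Int.emod_lt_of_pos r hm
  have hsum : (a + r) % m = (a + r % m) % m := by rw [Int.add_emod, Int.emod_eq_of_lt ha ham]
  rcases lt_or_ge (a + r % m) m with h | h
  · left
    rw [hsum, Int.emod_eq_of_lt (by omega) h]
    ring
  · right
    rw [hsum, ← Int.sub_emod_right, Int.emod_eq_of_lt (by omega) (by omega)]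
    ring

/-- Lemma 2.5: let `m₀ < m₁ < ⋯ < mₙ` be a strictly increasing finite sequence of
non-negative integers with the MC property and put `m = 1 + mₙ`.  If `A` is a set of
members of the sequence such that `(A + r) mod m` again consists of members of the
sequence, for some `r ≢ 0 (mod m)`, then `|A| ≤ 2`. -/
theorem mc_shift_card_le_two (n : ℕ) (ms : Fin (n + 1) → ℕ)
    (hmono : StrictMono ms)
    (hMC : ∀ a b c d : Fin (n + 1), a ≠ b → c ≠ d →
        (ms a : ℤ) - ms b = (ms c : ℤ) - ms d → a = c ∧ b = d)
    (m : ℕ) (hm : m = 1 + ms (Fin.last n))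
    (A : Finset ℤ) (hA : ∀ a ∈ A, ∃ i : Fin (n + 1), a = (ms i : ℤ))
    (r : ℤ) (hr : ¬ ((m : ℤ) ∣ r))
    (hshift : ∀ a ∈ A, ∃ i : Fin (n + 1), (a + r) % (m : ℤ) = (ms i : ℤ)) :
    A.card ≤ 2 := by
  have hlt : ∀ i, (ms i : ℤ) < m := fun i ↦ by
    have := hmono.monotone (Fin.le_last i)
    omega
  have hr₀ : r % (m : ℤ) ≠ 0 := fun h ↦ hr (Int.dvd_of_emod_eq_zero h)
  have hr₁ : r % (m : ℤ) < m := Int.emod_lt_of_pos r (by omega)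
  calc A.card ≤ ({r % (m : ℤ), r % (m : ℤ) - m} : Finset ℤ).card := by
        refine HasDistinctDifferences.card_le_of_forall_sub_mem (f := fun i ↦ (ms i : ℤ)) hMC
          (by simp only [Finset.mem_insert, Finset.mem_singleton]; omega) fun a ha ↦ ?_
        obtain ⟨i, rfl⟩ := hA a ha
        obtain ⟨j, hj⟩ := hshift _ ha
        refine ⟨i, j, rfl, ?_⟩
        simpa [← hj] using Int.emod_add_sub_eq_or (Int.natCast_nonneg _) (hlt i) r
    _ ≤ 2 := Finset.card_le_two
end

section
/- Any finite semigroup S can be embedded in a finite semigroup T generated by two elements α and β, where α is idempotent (α² = α) and β is nilpotent (βᵏ is a zero element for some k). -/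
/-!
Let `n = |S|`, enumerate `S` as `g₀, …, g_{n-1}`, and label the counters `0, …, n` of the
state space `S¹ × {0, …, n}` by `ℓ₀ = 1` and `ℓ_{i+1} = g_i`. Acting by partial maps on the
right, `α : (s, i) ↦ (s ℓ_i, 0)` is idempotent because `ℓ₀ = 1`, and the partial shift
`β : (s, i) ↦ (s, i + 1)`, undefined at `i = n`, has `β^{n+1}` equal to the empty map, which is
a zero. The word `α β^{k+1} α` sends `(s, i)` to `(s ℓ_i g_k, 0)`; these maps multiply like the
`g_k`, and evaluating at `(1, 0)` recovers `g_k`, so `g_k ↦ α β^{k+1} α` embeds `S` in the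
subsemigroup generated by `α` and `β`.
-/

/-- `spow a k` is the `(k+1)`-st power of `a` in a semigroup. -/
def spow {T : Type*} [Semigroup T] (a : T) : ℕ → T
  | 0 => a
  | n + 1 => spow a n * a

section spow

variable {M N : Type*} [Semigroup M] [Semigroup N]

theorem map_spow (f : M →ₙ* N) (a : M) (k : ℕ) : f (spow a k) = spow (f a) k := by
  induction k with
  | zero => rfl
  | succ k ih => simp only [spow, map_mul, ih]

theorem spow_mem {A : Subsemigroup M} {a : M} (ha : a ∈ A) (k : ℕ) : spow a k ∈ A := by
  induction k with
  | zero => exact ha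
  | succ k ih => exact A.mul_mem ih ha

end spow

theorem Subsemigroup.closure_pair_subtype_eq_top {M : Type*} [Mul M] {a b : M}
    (ha : a ∈ closure {a, b}) (hb : b ∈ closure {a, b}) :
    closure {(⟨a, ha⟩ : closure {a, b}), ⟨b, hb⟩} = ⊤ := by
  convert closure_closure_coe_preimage (s := ({a, b} : Set M)) using 2
  ext x
  simp [Subtype.ext_iff]

theorem exists_two_generated_of_embedding {S : Type*} [Semigroup S] {M : Type}
    [SemigroupWithZero M] [Finite M] (φ : S →ₙ* M) (hφ : Function.Injective φ) {a b : M}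
    (ha : a * a = a) {k : ℕ} (hb : spow b k = 0) (hφab : ∀ x, φ x ∈ Subsemigroup.closure {a, b}) :
    ∃ (T : Type) (_ : Semigroup T) (_ : Fintype T) (f : S → T) (α β : T),
      Function.Injective f ∧
      (∀ x y : S, f (x * y) = f x * f y) ∧
      Subsemigroup.closure {α, β} = ⊤ ∧
      α * α = α ∧
      (∃ (z : T) (k : ℕ), (∀ t : T, z * t = z ∧ t * z = z) ∧ spow β k = z) := by
  set T := Subsemigroup.closure ({a, b} : Set M)
  have haT : a ∈ T := Subsemigroup.subset_closure (by simp)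
  have hbT : b ∈ T := Subsemigroup.subset_closure (by simp)
  let β : T := ⟨b, hbT⟩
  have hz : ((spow β k : T) : M) = 0 := (map_spow (MulMemClass.subtype T) β k).trans hb
  refine ⟨T, inferInstance, Fintype.ofFinite T, fun x => ⟨φ x, hφab x⟩, ⟨a, haT⟩, β,
    fun x y hxy => hφ (congrArg Subtype.val hxy), fun x y => Subtype.ext (map_mul φ x y),
    Subsemigroup.closure_pair_subtype_eq_top haT hbT, Subtype.ext ha,
    spow β k, k, fun t => ⟨Subtype.ext ?_, Subtype.ext ?_⟩, rfl⟩
  · simp only [MulMemClass.coe_mul, hz, zero_mul]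
  · simp only [MulMemClass.coe_mul, hz, mul_zero]

/-- Partial transformations of `Q`, composed left to right: `f * g` applies `f` first. -/
def PartialTransformation (Q : Type*) : Type _ := Q → Option Q

namespace PartialTransformation

variable {Q : Type*}

instance : SemigroupWithZero (PartialTransformation Q) where
  mul f g q := (f q).bind g
  mul_assoc f g h := funext fun q => Option.bind_assoc (f q) g h
  zero _ := none
  zero_mul _ := rfl
  mul_zero f := funext fun q => Option.bind_fun_none (f q)

instance [Finite Q] : Finite (PartialTransformation Q) :=
  inferInstanceAs (Finite (Q → Option Q))

-- η-expanded so that `g` is applied as a function and the statement stays well typed for `rw`.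
theorem mul_apply (f g : PartialTransformation Q) (q : Q) :
    (f * g) q = (f q).bind fun x => g x := rfl

theorem zero_apply (q : Q) : (0 : PartialTransformation Q) q = none := rfl

end PartialTransformation

instance {α : Type*} [Finite α] : Finite (WithOne α) := inferInstanceAs (Finite (Option α))

namespace TwoGeneratedEmbedding

open PartialTransformation

variable {S : Type*} {n : ℕ}

variable (S n) in
def beta : PartialTransformation (WithOne S × Fin (n + 1)) := fun p =>
  if h : (p.2 : ℕ) + 1 < n + 1 then some (p.1, ⟨p.2 + 1, h⟩) else none

theorem spow_beta_apply (k : ℕ) (p : WithOne S × Fin (n + 1)) :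
    spow (beta S n) k p =
      if h : (p.2 : ℕ) + k + 1 < n + 1 then some (p.1, ⟨p.2 + k + 1, h⟩) else none := by
  induction k with
  | zero => rfl
  | succ k ih =>
    rw [spow, mul_apply, ih]
    by_cases h : (p.2 : ℕ) + k + 1 < n + 1
    · rw [dif_pos h, Option.bind_some, beta]
      simp only [← add_assoc]
    · rw [dif_neg h, dif_neg (by omega), Option.bind_none]

theorem spow_beta_eq_zero : spow (beta S n) n = 0 := by
  funext p
  rw [spow_beta_apply, dif_neg (by omega), zero_apply]

variable [Semigroup S]

def label (g : Fin n → S) : Fin (n + 1) → WithOne S := Fin.cons 1 fun i => (g i : WithOne S)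

variable (g : Fin n → S)

def alpha : PartialTransformation (WithOne S × Fin (n + 1)) := fun p => some (p.1 * label g p.2, 0)

def rightMul (x : S) : PartialTransformation (WithOne S × Fin (n + 1)) := fun p =>
  some (p.1 * label g p.2 * x, 0)

theorem alpha_mul_alpha : alpha g * alpha g = alpha g := by
  funext p
  simp [mul_apply, alpha, label]

theorem alpha_mul_spow_beta_mul_alpha (i : Fin n) :
    alpha g * spow (beta S n) i * alpha g = rightMul g (g i) := by
  funext p
  simp only [mul_apply, alpha, Option.bind_some, spow_beta_apply, Fin.val_zero, zero_add,
    dif_pos (Nat.succ_lt_succ i.isLt), rightMul]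
  rfl

theorem rightMul_mul (x y : S) : rightMul g (x * y) = rightMul g x * rightMul g y := by
  funext p
  simp [mul_apply, rightMul, label, mul_assoc]

theorem rightMul_injective : Function.Injective (rightMul g) := fun x y hxy => by
  simpa [rightMul, label] using congrFun hxy (1, 0)

def embedHom : S →ₙ* PartialTransformation (WithOne S × Fin (n + 1)) where
  toFun := rightMul g
  map_mul' := rightMul_mul g

theorem embedHom_mem_closure (hg : Function.Surjective g) (x : S) :
    embedHom g x ∈ Subsemigroup.closure {alpha g, beta S n} := by
  obtain ⟨i, rfl⟩ := hg x
  have hα : alpha g ∈ Subsemigroup.closure {alpha g, beta S n} :=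
    Subsemigroup.subset_closure (by simp)
  have hβ : beta S n ∈ Subsemigroup.closure {alpha g, beta S n} :=
    Subsemigroup.subset_closure (by simp)
  rw [embedHom, MulHom.coe_mk, ← alpha_mul_spow_beta_mul_alpha]
  exact Subsemigroup.mul_mem _ (Subsemigroup.mul_mem _ hα (spow_mem hβ i)) hα

end TwoGeneratedEmbedding

open TwoGeneratedEmbedding in
/-- Theorem 1.1: any finite semigroup `S` embeds in a finite semigroup `T` generated by
two elements `α` and `β`, where `α` is idempotent and `β` is nilpotent (some power of
`β` is a zero element of `T`). -/
theorem embed_finite_semigroup_two_generated (S : Type*) [Semigroup S] [Fintype S] :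
    ∃ (T : Type) (_ : Semigroup T) (_ : Fintype T) (f : S → T) (α β : T),
      Function.Injective f ∧
      (∀ x y : S, f (x * y) = f x * f y) ∧
      Subsemigroup.closure {α, β} = ⊤ ∧
      α * α = α ∧
      (∃ (z : T) (k : ℕ), (∀ t : T, z * t = z ∧ t * z = z) ∧ spow β k = z) := by
  -- `Shrink` moves `S`, hence the state space and `T`, into `Type`.
  let g : Fin (Fintype.card S) → Shrink.{0} S := equivShrink.{0} S ∘ (Fintype.equivFin S).symm
  have hg : Function.Surjective g :=
    ((Fintype.equivFin S).symm.trans (equivShrink.{0} S)).surjective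
  let ι : S ≃* Shrink.{0} S := Shrink.mulEquiv.symm
  exact exists_two_generated_of_embedding ((embedHom g).comp ι.toMulHom)
    ((rightMul_injective g).comp ι.injective) (alpha_mul_alpha g) spow_beta_eq_zero
    fun x => embedHom_mem_closure g hg (ι x)
end

section
/- In any semigroup generated by two idempotents e and f, the set of idempotents has cardinality at most 6. -/
/-!
Work in `S` with an identity adjoined, so that powers make sense. Because `e` and `f` are
idempotent, every product of them collapses to an alternating word, so every element of `S` is
`e`, `f`, or a positive power of one of `ef`, `fe`, `efe`, `fef`. Among the positive powers of a
single element `a` at most one is idempotent: if `aᵐ` and `aⁿ` are, then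
`aᵐ = (aᵐ)ⁿ = (aⁿ)ᵐ = aⁿ`.
-/

section Monoid

variable {M : Type*} [Monoid M]

theorem IsIdempotentElem.pow_eq_pow {a : M} {m n : ℕ} (hm : IsIdempotentElem (a ^ m))
    (hn : IsIdempotentElem (a ^ n)) (hm0 : m ≠ 0) (hn0 : n ≠ 0) : a ^ m = a ^ n :=
  calc a ^ m = (a ^ m) ^ n := (hm.pow_eq hn0).symm
    _ = (a ^ n) ^ m := by rw [← pow_mul, ← pow_mul, mul_comm]
    _ = a ^ n := hn.pow_eq hm0

def posPowers (a : M) : Set M :=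
  Set.range fun n : ℕ => a ^ (n + 1)

theorem pow_succ_mem_posPowers (a : M) (n : ℕ) : a ^ (n + 1) ∈ posPowers a :=
  ⟨n, rfl⟩

theorem self_mem_posPowers (a : M) : a ∈ posPowers a :=
  ⟨0, pow_one a⟩

theorem subsingleton_posPowers_inter_idempotents (a : M) :
    (posPowers a ∩ {x | IsIdempotentElem x}).Subsingleton := by
  rintro _ ⟨⟨m, rfl⟩, hm⟩ _ ⟨⟨n, rfl⟩, hn⟩
  exact hm.pow_eq_pow hn m.succ_ne_zero n.succ_ne_zero

theorem pow_succ_mul_of_mul_eq_self {x y : M} (h : x * y = x) (n : ℕ) :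
    x ^ (n + 1) * y = x ^ (n + 1) := by
  rw [pow_succ, mul_assoc, h]

theorem IsIdempotentElem.mul_mul_self_pow_succ {e : M} (he : IsIdempotentElem e) (f : M)
    (n : ℕ) : (e * f * e) ^ (n + 1) = (e * f) ^ (n + 1) * e := by
  induction n with
  | zero => simp
  | succ n ih =>
    rw [pow_succ, ih, pow_succ _ (n + 1)]
    simp only [mul_assoc, he.mul_self_mul]

def alternatingProducts (e f : M) : Set M :=
  {1, e, f} ∪ (posPowers (e * f) ∪ posPowers (f * e) ∪ posPowers (e * f * e) ∪
    posPowers (f * e * f))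

theorem alternatingProducts_comm (e f : M) : alternatingProducts e f = alternatingProducts f e := by
  ext x
  simp only [alternatingProducts, Set.mem_union, Set.mem_insert_iff, Set.mem_singleton_iff]
  tauto

variable {e f : M}

theorem mul_right_mem_alternatingProducts (he : IsIdempotentElem e) (hf : IsIdempotentElem f)
    {x : M} (hx : x ∈ alternatingProducts e f) : x * e ∈ alternatingProducts e f := by
  rcases hx with (rfl | rfl | hx) | (((⟨n, rfl⟩ | ⟨n, rfl⟩) | ⟨n, rfl⟩) | ⟨n, rfl⟩) <;>
    beta_reduce
  · simp [alternatingProducts]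
  · simp [alternatingProducts, he.eq]
  · rw [hx]
    simp [alternatingProducts, self_mem_posPowers]
  · rw [← he.mul_mul_self_pow_succ]
    simp [alternatingProducts, pow_succ_mem_posPowers]
  · rw [pow_succ_mul_of_mul_eq_self (by rw [mul_assoc, he.eq])]
    simp [alternatingProducts, pow_succ_mem_posPowers]
  · rw [pow_succ_mul_of_mul_eq_self (by rw [mul_assoc, he.eq])]
    simp [alternatingProducts, pow_succ_mem_posPowers]
  · rw [hf.mul_mul_self_pow_succ, mul_assoc, ← pow_succ]
    simp [alternatingProducts, pow_succ_mem_posPowers]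

theorem closure_pair_subset_alternatingProducts (he : IsIdempotentElem e)
    (hf : IsIdempotentElem f) : (Submonoid.closure {e, f} : Set M) ⊆ alternatingProducts e f := by
  intro x hx
  induction hx using Submonoid.closure_induction_right with
  | one => simp [alternatingProducts]
  | mul_right x _ y hy ih =>
    rcases hy with rfl | rfl
    · exact mul_right_mem_alternatingProducts he hf ih
    · rw [alternatingProducts_comm] at ih ⊢
      exact mul_right_mem_alternatingProducts hf he ih

theorem encard_idempotents_alternatingProducts_le_six (e f : M) :
    {x ∈ alternatingProducts e f | IsIdempotentElem x ∧ x ≠ 1}.encard ≤ 6 := by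
  set I := fun a : M => posPowers a ∩ {x | IsIdempotentElem x}
  have hI (a : M) : (I a).encard ≤ 1 :=
    Set.encard_le_one_iff_subsingleton.mpr (subsingleton_posPowers_inter_idempotents a)
  have hsub : {x ∈ alternatingProducts e f | IsIdempotentElem x ∧ x ≠ 1} ⊆
      {e, f} ∪ (I (e * f) ∪ I (f * e) ∪ I (e * f * e) ∪ I (f * e * f)) := by
    rintro x ⟨(h1 | hef) | (((h | h) | h) | h), hx, hx1⟩
    · exact absurd h1 hx1
    · exact Or.inl hef
    all_goals simp [I, h, hx]
  grw [hsub, Set.encard_union_le, Set.encard_insert_le, Set.encard_singleton, Set.encard_union_le,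
    Set.encard_union_le, Set.encard_union_le, hI, hI, hI, hI]
  norm_num

end Monoid

/-- In any semigroup generated by two idempotents, the set of idempotents is finite of
cardinality at most 6. -/
theorem idempotents_card_le_six (S : Type*) [Semigroup S] (e f : S)
    (he : e * e = e) (hf : f * f = f)
    (hgen : Subsemigroup.closure {e, f} = (⊤ : Subsemigroup S)) :
    {x : S | x * x = x}.Finite ∧ {x : S | x * x = x}.ncard ≤ 6 := by
  have hcoe (x : S) : (x : WithOne S) ∈ Submonoid.closure {(e : WithOne S), (f : WithOne S)} := by
    induction hgen ▸ Subsemigroup.mem_top x using Subsemigroup.closure_induction with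
    | mem z hz => exact Submonoid.subset_closure (by rcases hz with rfl | rfl <;> simp)
    | mul a b _ _ ha hb => exact mul_mem ha hb
  have hidem {x : S} (hx : x * x = x) : IsIdempotentElem (x : WithOne S) := by
    rw [IsIdempotentElem, ← WithOne.coe_mul, hx]
  have hmaps : Set.MapsTo ((↑) : S → WithOne S) {x | x * x = x}
      {y ∈ alternatingProducts (e : WithOne S) f | IsIdempotentElem y ∧ y ≠ 1} := fun x hx =>
    ⟨closure_pair_subset_alternatingProducts (hidem he) (hidem hf) (hcoe x), hidem hx,
      WithOne.coe_ne_one⟩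
  rw [← Set.encard_le_coe_iff_finite_ncard_le]
  exact (Set.encard_le_encard_of_injOn hmaps WithOne.coe_injective.injOn).trans
    (encard_idempotents_alternatingProducts_le_six _ _)
end

section
/- A semigroup generated by two idempotents contains no three-element chain of idempotents: there do not exist idempotents a, b, c with a ≠ b, b ≠ c, a ≠ c such that ab = ba = a, bc = cb = b. -/
/-!
Each element of `⟨e, f⟩` is fixed on the left by `e` or `f`, and likewise on the right. Swapping
`e` and `f` if necessary, `e * c = c`, and then `a`, `b`, `c` all lie in the corner `eSe` or in
the corner `eSf`. Inside `S¹`, every element of `eSf` is a power `(ef)^(n+1)` and every element of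
`eSe` other than `e` is a power `(efe)^(n+1)`. Two idempotent positive powers `x^m`, `x^n` of one
element coincide, since both equal `x^(mn)`. So `eSf` contains at most one idempotent and `eSe` at
most two, one of them `e`; neither holds the chain, which in `eSe` would satisfy `a < b < c ≤ e`.
-/

section Monoid

variable {M : Type*} [Monoid M]

theorem pow_eq_pow_of_isIdempotentElem {x : M} {m n : ℕ} (hm : m ≠ 0) (hn : n ≠ 0)
    (hxm : IsIdempotentElem (x ^ m)) (hxn : IsIdempotentElem (x ^ n)) : x ^ m = x ^ n :=
  calc x ^ m = (x ^ m) ^ n := (hxm.pow_eq hn).symm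
    _ = (x ^ n) ^ m := by rw [← pow_mul, ← pow_mul, mul_comm]
    _ = x ^ n := hxn.pow_eq hm

theorem mul_pow_succ_eq_pow_succ_mul {x e : M} (h : e * x = x) :
    ∀ n : ℕ, (x * e) ^ (n + 1) = x ^ (n + 1) * e
  | 0 => by rw [zero_add, pow_one, pow_one]
  | n + 1 => by
    rw [pow_succ, mul_pow_succ_eq_pow_succ_mul h n, mul_assoc, ← mul_assoc e, h, ← mul_assoc,
      ← pow_succ]

variable {e f : M}

theorem exists_corner_pow_of_mem_closure_pair (he : IsIdempotentElem e)
    (hf : IsIdempotentElem f) {x : M} (hx : x ∈ Submonoid.closure {e, f}) :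
    (∃ n, e * x * e = (e * f) ^ n * e) ∧ ∃ n, e * x * f = (e * f) ^ (n + 1) := by
  induction hx using Submonoid.closure_induction_right with
  | one =>
    exact ⟨⟨0, by rw [mul_one, pow_zero, one_mul, he.eq]⟩,
      ⟨0, by rw [mul_one, zero_add, pow_one]⟩⟩
  | mul_right x _ g hg ih =>
    obtain ⟨⟨m, hm⟩, ⟨n, hn⟩⟩ := ih
    rcases hg with rfl | rfl
    · refine ⟨⟨m, by rw [← mul_assoc, he.mul_mul_self, hm]⟩, ⟨m, ?_⟩⟩
      rw [← mul_assoc, hm, mul_assoc, pow_succ]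
    · refine ⟨⟨n + 1, by rw [← mul_assoc, hn]⟩, ⟨n, ?_⟩⟩
      rw [← mul_assoc, hf.mul_mul_self, hn]

end Monoid

section Semigroup

variable {S : Type*} [Semigroup S] {e f : S}

theorem mul_eq_self_of_mem_closure_pair (he : IsIdempotentElem e) (hf : IsIdempotentElem f)
    {x : S} (hx : x ∈ Subsemigroup.closure {e, f}) :
    (e * x = x ∨ f * x = x) ∧ (x * e = x ∨ x * f = x) := by
  induction hx using Subsemigroup.closure_induction with
  | mem g hg =>
    rcases hg with rfl | rfl
    · exact ⟨.inl he, .inl he⟩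
    · exact ⟨.inr hf, .inr hf⟩
  | mul x y _ _ hx hy =>
    refine ⟨hx.1.imp ?_ ?_, hy.2.imp ?_ ?_⟩ <;> intro h
    · rw [← mul_assoc, h]
    · rw [← mul_assoc, h]
    · rw [mul_assoc, h]
    · rw [mul_assoc, h]

theorem coe_mem_closure_pair {x : S} (hx : x ∈ Subsemigroup.closure {e, f}) :
    (x : WithOne S) ∈ Submonoid.closure {(e : WithOne S), (f : WithOne S)} := by
  refine Subsemigroup.closure_le (S := (Submonoid.closure _).toSubsemigroup.comap
    WithOne.coeMulHom).mpr ?_ hx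
  rintro _ (rfl | rfl) <;> exact Submonoid.subset_closure (by simp)

theorem exists_coe_corner_pow_of_mem_closure_pair (he : IsIdempotentElem e)
    (hf : IsIdempotentElem f) {x : S} (hx : x ∈ Subsemigroup.closure {e, f}) :
    (∃ n, ((e * x * e : S) : WithOne S) = ((e * f : S) : WithOne S) ^ n * e) ∧
      ∃ n, ((e * x * f : S) : WithOne S) = ((e * f : S) : WithOne S) ^ (n + 1) :=
  exists_corner_pow_of_mem_closure_pair (he.map WithOne.coeMulHom) (hf.map WithOne.coeMulHom)
    (coe_mem_closure_pair hx)

theorem eq_of_isIdempotentElem_of_coe_eq_pow {a b : S} {x : WithOne S} {m n : ℕ} (hm : m ≠ 0)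
    (hn : n ≠ 0) (ha : (a : WithOne S) = x ^ m) (hb : (b : WithOne S) = x ^ n)
    (ha_idem : IsIdempotentElem a) (hb_idem : IsIdempotentElem b) : a = b := by
  apply WithOne.coe_injective
  rw [ha, hb]
  exact pow_eq_pow_of_isIdempotentElem hm hn (ha ▸ ha_idem.map WithOne.coeMulHom)
    (hb ▸ hb_idem.map WithOne.coeMulHom)

theorem eq_of_isIdempotentElem_of_mem_eSf (he : IsIdempotentElem e) (hf : IsIdempotentElem f)
    {a b : S} (ha : a ∈ Subsemigroup.closure {e, f}) (hb : b ∈ Subsemigroup.closure {e, f})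
    (ha_corner : e * a * f = a) (hb_corner : e * b * f = b)
    (ha_idem : IsIdempotentElem a) (hb_idem : IsIdempotentElem b) : a = b := by
  obtain ⟨-, m, hm⟩ := exists_coe_corner_pow_of_mem_closure_pair he hf ha
  obtain ⟨-, n, hn⟩ := exists_coe_corner_pow_of_mem_closure_pair he hf hb
  rw [ha_corner] at hm
  rw [hb_corner] at hn
  exact eq_of_isIdempotentElem_of_coe_eq_pow m.succ_ne_zero n.succ_ne_zero hm hn ha_idem hb_idem

theorem eq_of_isIdempotentElem_of_mem_eSe (he : IsIdempotentElem e) (hf : IsIdempotentElem f)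
    {a b : S} (ha : a ∈ Subsemigroup.closure {e, f}) (hb : b ∈ Subsemigroup.closure {e, f})
    (ha_corner : e * a * e = a) (hb_corner : e * b * e = b) (ha_ne : a ≠ e) (hb_ne : b ≠ e)
    (ha_idem : IsIdempotentElem a) (hb_idem : IsIdempotentElem b) : a = b := by
  have hef : (e : WithOne S) * ↑(e * f) = ↑(e * f) := congrArg _ (he.mul_self_mul f)
  obtain ⟨⟨_ | m, hm⟩, -⟩ := exists_coe_corner_pow_of_mem_closure_pair he hf ha
  · exact absurd (by simpa [ha_corner] using hm) ha_ne
  obtain ⟨⟨_ | n, hn⟩, -⟩ := exists_coe_corner_pow_of_mem_closure_pair he hf hb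
  · exact absurd (by simpa [hb_corner] using hn) hb_ne
  rw [ha_corner, ← mul_pow_succ_eq_pow_succ_mul hef] at hm
  rw [hb_corner, ← mul_pow_succ_eq_pow_succ_mul hef] at hn
  exact eq_of_isIdempotentElem_of_coe_eq_pow m.succ_ne_zero n.succ_ne_zero hm hn ha_idem hb_idem

end Semigroup

/-- A semigroup generated by two idempotents contains no three-element chain of
idempotents under the natural partial order (`a ≤ b` iff `ab = ba = a`). -/
theorem no_three_chain_of_idempotents (S : Type*) [Semigroup S] (e f : S)
    (he : e * e = e) (hf : f * f = f)
    (hgen : Subsemigroup.closure {e, f} = (⊤ : Subsemigroup S)) :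
    ¬ ∃ a b c : S, a * a = a ∧ b * b = b ∧ c * c = c ∧
        a ≠ b ∧ b ≠ c ∧ a ≠ c ∧
        a * b = a ∧ b * a = a ∧ b * c = b ∧ c * b = b := by
  rintro ⟨a, b, c, ha, hb, -, hab, hbc, -, hab_a, hba_a, hbc_b, hcb_b⟩
  have hmem (x : S) : x ∈ Subsemigroup.closure {e, f} := hgen ▸ Subsemigroup.mem_top x
  clear hgen
  wlog hec : e * c = c generalizing e f
  · have hfc : f * c = c := (mul_eq_self_of_mem_closure_pair he hf (hmem c)).1.resolve_left hec
    exact this f e hf he (fun x => Set.pair_comm e f ▸ hmem x) hfc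
  have heb : e * b = b := by rw [← hcb_b, ← mul_assoc, hec]
  have hea : e * a = a := by rw [← hba_a, ← mul_assoc, heb]
  rcases (mul_eq_self_of_mem_closure_pair he hf (hmem c)).2 with hce | hcf
  · have hbe : b * e = b := by rw [← hbc_b, mul_assoc, hce]
    have hae : a * e = a := by rw [← hab_a, mul_assoc, hbe]
    have ha_ne : a ≠ e := by rintro rfl; exact hab (hab_a.symm.trans heb)
    have hb_ne : b ≠ e := by rintro rfl; exact hbc (hbc_b.symm.trans hec)
    exact hab (eq_of_isIdempotentElem_of_mem_eSe he hf (hmem a) (hmem b) (by rw [hea, hae])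
      (by rw [heb, hbe]) ha_ne hb_ne ha hb)
  · have hbf : b * f = b := by rw [← hbc_b, mul_assoc, hcf]
    have haf : a * f = a := by rw [← hab_a, mul_assoc, hbf]
    exact hab (eq_of_isIdempotentElem_of_mem_eSf he hf (hmem a) (hmem b) (by rw [hea, haf])
      (by rw [heb, hbf]) ha hb)
end

section
/- If a band B (a semigroup satisfying x² = x) satisfies a heterotypical identity (an identity p = q in which some variable occurs in p but not in q, or vice versa), then B satisfies the identity xyx = x, i.e., B is a rectangular band. -/
/-- Evaluation of a nonempty word (given as head and tail) in a semigroup under the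
variable assignment `σ`. -/
def evalWord {V S : Type*} [Semigroup S] (σ : V → S) : V → List V → S
  | v, [] => σ v
  | v, w :: t => σ v * evalWord σ w t

/-!
For `x, y` in a band put `a = x * y * x`; then `x` and `a` are idempotents with
`x * a = a = a * x`, so a word evaluated at `a` on one variable `s` and at `x` on all others
equals `a` if `s` occurs in it and `x` otherwise. Taking `s` to occur on exactly one side of the
heterotypical identity gives `a = x`.
-/

lemma evalWord_update_const {V S : Type*} [Semigroup S] [DecidableEq V] {x a : S}
    (hx : x * x = x) (ha : a * a = a) (hxa : x * a = a) (hax : a * x = a) (s : V) (v : V)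
    (w : List V) :
    evalWord (Function.update (fun _ => x) s a) v w = if s ∈ v :: w then a else x := by
  induction w generalizing v with
  | nil => by_cases h : s = v <;> simp [evalWord, h, eq_comm]
  | cons b t ih =>
    rw [evalWord, ih]
    simp only [List.mem_cons (l := b :: t), Function.update_apply]
    split_ifs <;> simp_all

/-- If a band `B` satisfies a heterotypical identity `p = q` (the sets of variables
occurring in the two sides differ), then `B` satisfies `x * y * x = x`, i.e. `B` is a
rectangular band. -/
theorem band_heterotypical_implies_rectangular (B : Type*) [Semigroup B]
    (hband : ∀ x : B, x * x = x)
    (V : Type*) (p q : V × List V)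
    (hhet : ({p.1} ∪ {v | v ∈ p.2} : Set V) ≠ ({q.1} ∪ {v | v ∈ q.2} : Set V))
    (hid : ∀ σ : V → B, evalWord σ p.1 p.2 = evalWord σ q.1 q.2) :
    ∀ x y : B, x * y * x = x := by
  classical
  intro x y
  set a := x * y * x
  have hxa : x * a = a := by simp only [a, ← mul_assoc, hband]
  have hax : a * x = a := by simp only [a, mul_assoc, hband]
  obtain ⟨s, hs⟩ : ∃ s, ¬(s ∈ p.1 :: p.2 ↔ s ∈ q.1 :: q.2) := by
    by_contra! h
    exact hhet (Set.ext fun v => by simpa using h v)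
  have h := hid (Function.update (fun _ => x) s a)
  rw [evalWord_update_const (hband x) (hband a) hxa hax,
    evalWord_update_const (hband x) (hband a) hxa hax] at h
  by_cases hp : s ∈ p.1 :: p.2
  · have hq : s ∉ q.1 :: q.2 := fun hq => hs (iff_of_true hp hq)
    rwa [if_pos hp, if_neg hq] at h
  · have hq : s ∈ q.1 :: q.2 := by_contra fun hq => hs (iff_of_false hp hq)
    rw [if_neg hp, if_pos hq] at h
    exact h.symm
end

section
/- Let S be a monoid with |E(S)| ≥ 2 whose idempotents form a band, and let T₀ = M⁰[E(S); m, m; I_m] ∪ {1} (the Rees matrix band over E(S) with identity and zero adjoined). Then T₀ satisfies exactly the same semigroup identities as E(S): a homotypical identity p = q holds in E(S) if and only if it holds in T₀. -/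
/-- The diagonal part of the Rees matrix semigroup `M⁰[E; m, m; I_m]` over a band `E`:
elements `λ(e, i, i)` written `(e, i)`, together with a zero, with
`(e,i)(f,j) = (ef, i)` if `i = j`, else `0`. -/
abbrev DiagZero (E : Type*) (m : ℕ) : Type _ := Option (E × Fin m)

/-- Multiplication on `DiagZero`. -/
def diagMul {E : Type*} [Mul E] {m : ℕ} (a b : DiagZero E m) : DiagZero E m :=
  a.bind fun x => b.bind fun y =>
    if x.2 = y.2 then some (x.1 * y.1, x.2) else none

instance DiagZero.instSemigroup (E : Type*) [Semigroup E] (m : ℕ) :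
    Semigroup (DiagZero E m) where
  mul := diagMul
  mul_assoc a b c := by
    show diagMul (diagMul a b) c = diagMul a (diagMul b c)
    rcases a with _ | ⟨s, i⟩ <;> rcases b with _ | ⟨t, j⟩ <;>
      rcases c with _ | ⟨u, k⟩ <;>
      simp only [diagMul, Option.bind] <;> try rfl
    all_goals split_ifs <;> simp_all [diagMul, Option.bind, mul_assoc]

/-- `T₀ = M⁰[E; m, m; I_m] ∪ {1}`: the diagonal Rees matrix band over `E` together
with its zero and an adjoined identity. -/
abbrev DiagBand (E : Type*) [Semigroup E] (m : ℕ) : Type _ := WithOne (DiagZero E m)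

/-!
`T₀` embeds into a power of `E⁰ = WithZero E`: for each `i` the coordinate map sending
`(e, i) ↦ e` and every other element of `M⁰` to `0` is a homomorphism, and one more
coordinate, `1` on the adjoined identity and `0` elsewhere, separates the identity. A
homotypical identity of `E` holds in `E⁰` (an assignment with a letter sent to `0` makes both
sides `0`, any other one comes from `E`), hence in every power of `E⁰` and in every
subsemigroup of one. Conversely `E` is isomorphic to the diagonal copy `{(e, 0)}` in `T₀`.
-/

def SatisfiesIdentity {V : Type*} (S : Type*) [Semigroup S] (p q : V × List V) : Prop :=
  ∀ σ : V → S, evalWord σ p.1 p.2 = evalWord σ q.1 q.2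

def wordContent {V : Type*} (p : V × List V) : Set V := {p.1} ∪ {v | v ∈ p.2}

section Words

variable {V S T : Type*} [Semigroup S] [Semigroup T]

lemma mem_wordContent {p : V × List V} {w : V} : w ∈ wordContent p ↔ w ∈ p.1 :: p.2 := by
  simp [wordContent]

lemma map_evalWord (f : S →ₙ* T) (σ : V → S) (v : V) (l : List V) :
    f (evalWord σ v l) = evalWord (f ∘ σ) v l := by
  induction l generalizing v with
  | nil => rfl
  | cons w t ih => simp only [evalWord, map_mul, ih, Function.comp_apply]

lemma evalWord_congr {σ τ : V → S} {v : V} {l : List V} (h : ∀ w ∈ v :: l, σ w = τ w) :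
    evalWord σ v l = evalWord τ v l := by
  induction l generalizing v with
  | nil => exact h v List.mem_cons_self
  | cons w t ih =>
    simp only [evalWord]
    rw [h v List.mem_cons_self, ih fun u hu => h u (List.mem_cons_of_mem v hu)]

lemma evalWord_eq_zero_iff {M : Type*} [SemigroupWithZero M] [NoZeroDivisors M] {σ : V → M}
    {v : V} {l : List V} : evalWord σ v l = 0 ↔ ∃ w ∈ v :: l, σ w = 0 := by
  induction l generalizing v with
  | nil => simp [evalWord]
  | cons w t ih => simp [evalWord, mul_eq_zero, ih]

namespace SatisfiesIdentity

variable {p q : V × List V}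

lemma of_injective (f : S →ₙ* T) (hf : Function.Injective f) (h : SatisfiesIdentity T p q) :
    SatisfiesIdentity S p q := fun σ =>
  hf <| by rw [map_evalWord, map_evalWord, h]

lemma pi {ι : Type*} {T : ι → Type*} [∀ i, Semigroup (T i)]
    (h : ∀ i, SatisfiesIdentity (T i) p q) : SatisfiesIdentity (∀ i, T i) p q := fun σ =>
  funext fun i => by
    change Pi.evalMulHom T i (evalWord σ _ _) = Pi.evalMulHom T i (evalWord σ _ _)
    rw [map_evalWord, map_evalWord, h]

lemma withZero {M : Type*} [Monoid M] (hpq : wordContent p = wordContent q)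
    (h : SatisfiesIdentity M p q) : SatisfiesIdentity (WithZero M) p q := by
  intro σ
  have hmem (w : V) : w ∈ p.1 :: p.2 ↔ w ∈ q.1 :: q.2 := by
    rw [← mem_wordContent, hpq, mem_wordContent]
  by_cases hzero : ∃ w ∈ p.1 :: p.2, σ w = 0
  · have hzero' : ∃ w ∈ q.1 :: q.2, σ w = 0 := by
      obtain ⟨w, hw, hσw⟩ := hzero
      exact ⟨w, (hmem w).1 hw, hσw⟩
    rw [evalWord_eq_zero_iff.2 hzero, evalWord_eq_zero_iff.2 hzero']
  push Not at hzero
  classical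
  set τ : V → M := fun w => if hw : σ w = 0 then 1 else WithZero.unzero hw
  have hτ : ∀ w ∈ p.1 :: p.2, σ w = ((τ w : M) : WithZero M) := fun w hw => by
    simp [τ, hzero w hw]
  have hcoe := map_evalWord (WithZero.coeMonoidHom : M →* WithZero M).toMulHom τ
  rw [evalWord_congr hτ, evalWord_congr fun w hw => hτ w ((hmem w).2 hw)]
  exact (hcoe _ _).symm.trans ((congrArg _ (h τ)).trans (hcoe _ _))

end SatisfiesIdentity

end Words

section DiagBand

variable {E : Type*} {m : ℕ}

/-- Coordinate `none` is `0` here and becomes `1` on the adjoined identity under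
`WithOne.lift`, which is how it separates the identity. -/
def diagCoord [Mul E] : DiagZero E m → Option (Fin m) → WithZero E
  | some (e, j), some i => if j = i then e else 0
  | _, _ => 0

lemma diagCoord_injective [Mul E] : Function.Injective (diagCoord : DiagZero E m → _) := by
  rintro (_ | ⟨e, j⟩) (_ | ⟨f, l⟩) h
  · rfl
  · simpa [diagCoord] using congrFun h (some l)
  · simpa [diagCoord] using congrFun h (some j)
  · have := congrFun h (some j)
    simp only [diagCoord] at this
    split_ifs at this with hlj <;> simp_all

def diagCoordHom [Semigroup E] : DiagZero E m →ₙ* (Option (Fin m) → WithZero E) where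
  toFun := diagCoord
  map_mul' x y := by
    funext k
    change diagCoord (diagMul x y) k = diagCoord x k * diagCoord y k
    rcases x with _ | ⟨e, j⟩ <;> rcases y with _ | ⟨f, l⟩ <;> rcases k with _ | i <;>
      simp only [diagMul, diagCoord, Option.bind, zero_mul, mul_zero]
    all_goals split_ifs <;> simp_all

def diagBandEmbedding [Monoid E] : DiagBand E m →* (Option (Fin m) → WithZero E) :=
  WithOne.lift diagCoordHom

lemma diagBandEmbedding_injective [Monoid E] :
    Function.Injective (diagBandEmbedding : DiagBand E m → _) := by
  have hcoe (a : DiagZero E m) : diagBandEmbedding (WithOne.coe a : DiagBand E m) = diagCoord a :=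
    WithOne.lift_coe _ a
  have hcoe_ne_one (a : DiagZero E m) :
      diagBandEmbedding (WithOne.coe a : DiagBand E m) ≠ 1 := fun h => by
    have := congrFun h none
    rw [hcoe] at this
    cases a <;> exact zero_ne_one this
  intro x y h
  induction x using WithOne.recOneCoe <;> induction y using WithOne.recOneCoe
  · rfl
  · exact absurd (h.symm.trans (map_one _)) (hcoe_ne_one _)
  · exact absurd (h.trans (map_one _)) (hcoe_ne_one _)
  · rw [hcoe, hcoe] at h
    rw [diagCoord_injective h]

def diagonalCopy [Semigroup E] (i : Fin m) : E →ₙ* DiagBand E m where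
  toFun e := WithOne.coe (some (e, i) : DiagZero E m)
  map_mul' e f := by
    rw [← WithOne.coe_mul]
    exact congrArg _ (if_pos rfl).symm

lemma diagonalCopy_injective [Semigroup E] (i : Fin m) :
    Function.Injective (diagonalCopy (E := E) i) := fun e f h => by
  simpa [diagonalCopy] using h

end DiagBand

theorem diagBand_same_identities_general (E : Type*) [Monoid E]
    (m : ℕ) (hm : 1 ≤ m)
    (V : Type*) (p q : V × List V)
    (hhomo : ({p.1} ∪ {v | v ∈ p.2} : Set V) = ({q.1} ∪ {v | v ∈ q.2} : Set V)) :
    (∀ σ : V → E, evalWord σ p.1 p.2 = evalWord σ q.1 q.2) ↔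
    (∀ σ : V → DiagBand E m, evalWord σ p.1 p.2 = evalWord σ q.1 q.2) := by
  change SatisfiesIdentity E p q ↔ SatisfiesIdentity (DiagBand E m) p q
  constructor
  · intro hE
    exact (SatisfiesIdentity.pi fun _ => hE.withZero hhomo).of_injective
      diagBandEmbedding.toMulHom diagBandEmbedding_injective
  · intro hT
    exact hT.of_injective (diagonalCopy ⟨0, hm⟩) (diagonalCopy_injective _)

/-- Corollary 3.7 / Theorem 4.6(b): let `E` be a band with identity having at least two
elements (the band of idempotents of a monoid `S`), and let `T₀ = M⁰[E; m, m; I_m] ∪ {1}`.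
Then a homotypical identity `p = q` (both sides involve the same variables) holds in `E`
if and only if it holds in `T₀`; that is, `T₀` satisfies exactly the same semigroup
identities as `E`. -/
theorem diagBand_same_identities (E : Type*) [Monoid E] [Nontrivial E]
    (hband : ∀ x : E, x * x = x) (m : ℕ) (hm : 1 ≤ m)
    (V : Type*) (p q : V × List V)
    (hhomo : ({p.1} ∪ {v | v ∈ p.2} : Set V) = ({q.1} ∪ {v | v ∈ q.2} : Set V)) :
    (∀ σ : V → E, evalWord σ p.1 p.2 = evalWord σ q.1 q.2) ↔
    (∀ σ : V → DiagBand E m, evalWord σ p.1 p.2 = evalWord σ q.1 q.2) :=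
  diagBand_same_identities_general E m hm V p q hhomo
end
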